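/- arXiv:1806.04256 — 3 statements merged into one kernel-verified Lean document; each statement's English description precedes it below -/
import Mathlib

section
/- Let D_p be a distribution over subsets of [n] that is δ_T-biased with marginals p, let ℓ ∈ ℕ, and let f_1,…,f_ℓ : {±1}^n → ℝ be (not necessarily distinct) functions. Then |E_{T∼D_p}[Π_{i=1}^ℓ Var[Bias_T f_i]] − E_{T∼R_p}[Π_{i=1}^ℓ Var[Bias_T f_i]]| ≤ δ_T · Π_{i=1}^ℓ Var[f_i]. -/
/-! Expanding in the Walsh basis, `Var[Bias_T f] = ∑_{∅ ≠ S ⊆ T} f̂(S)²`, so the product of the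
variances is the nonnegative combination `∑_{S₁,…,S_ℓ ≠ ∅} ∏ᵢ f̂ᵢ(Sᵢ)² · 1[S₁ ∪ ⋯ ∪ S_ℓ ⊆ T]`
of the monotone indicators `1[U ⊆ T]`. Each indicator has expectation `p^|U|` under `R_p` and
is within `δ_T` of it under `D_p` (exactly equal when `U = ∅`), and by Parseval the total
weight of the combination is `∏ᵢ Var[fᵢ]`. -/

open Finset

/-- Uniform-distribution expectation of `f` over a finite type. -/
noncomputable def uexp {α : Type*} [Fintype α] (f : α → ℝ) : ℝ :=
  (∑ x : α, f x) / (Fintype.card α : ℝ)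

/-- Variance under the uniform distribution. -/
noncomputable def uvar {α : Type*} [Fintype α] (f : α → ℝ) : ℝ :=
  uexp (fun x => f x ^ 2) - (uexp f) ^ 2

open Classical in
/-- Real-valued indicator of a proposition. -/
noncomputable def ind (P : Prop) : ℝ := if P then 1 else 0

/-- `sel T x y` agrees with `x` on `T` and with `y` outside of `T`. -/
def sel {n : ℕ} (T : Finset (Fin n)) (x y : Fin n → Bool) : Fin n → Bool :=
  fun i => if i ∈ T then x i else y i

/-- The bias function of `f` with respect to the set `T` of live coordinates. -/
noncomputable def biasFn {n : ℕ} (T : Finset (Fin n)) (f : (Fin n → Bool) → ℝ) :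
    (Fin n → Bool) → ℝ :=
  fun x => uexp (fun y : Fin n → Bool => f (sel T x y))

/-- A layered read-once branching program of width `w` and length `n`.
`V i` is the set of vertices of layer `i`; the Boolean `true` corresponds to the
edge label `1` and `false` to the edge label `-1`; the program outputs `-1` iff it
accepts. -/
structure ROBP (w n : ℕ) where
  V : Fin (n + 1) → Finset (Fin w)
  V_nonempty : ∀ i, (V i).Nonempty
  start : Fin w
  start_mem : start ∈ V 0
  trans : Fin n → Bool → Fin w → Fin w
  trans_mem : ∀ (i : Fin n) (b : Bool) (v : Fin w), v ∈ V i.castSucc → trans i b v ∈ V i.succ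
  accept : Fin w → Bool

namespace ROBP

variable {w n : ℕ}

/-- The state reached at layer `j` when starting from state `v` at layer `i`. -/
def runTo (B : ROBP w n) (x : Fin n → Bool) (v : Fin w) (i j : ℕ) : Fin w :=
  if h : i < j ∧ i < n then runTo B x (B.trans ⟨i, h.2⟩ (x ⟨i, h.2⟩) v) (i + 1) j else v
termination_by j - i
decreasing_by omega

/-- The final state on input `x`, starting from the start vertex. -/
def run (B : ROBP w n) (x : Fin n → Bool) : Fin w := B.runTo x B.start 0 n

/-- The `±1` value computed by `B` on `x` (`-1` means accept). -/
noncomputable def eval (B : ROBP w n) (x : Fin n → Bool) : ℝ :=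
  if B.accept (B.run x) then -1 else 1

/-- Probability (over a uniformly random input) of reaching vertex `v` at layer `j`. -/
noncomputable def reachProb (B : ROBP w n) (j : ℕ) (v : Fin w) : ℝ :=
  uexp (fun x : Fin n → Bool => if B.runTo x B.start 0 j = v then (1 : ℝ) else 0)

/-- Acceptance probability starting from vertex `v` at layer `i`, on a uniform input. -/
noncomputable def beta (B : ROBP w n) (i : ℕ) (v : Fin w) : ℝ :=
  uexp (fun x : Fin n → Bool => if B.accept (B.runTo x v i n) then (1 : ℝ) else 0)

/-- Layer `i` of edges is colliding: two distinct vertices of layer `i` have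
equally-labeled edges entering the same vertex of layer `i+1`. -/
def Colliding (B : ROBP w n) (i : Fin n) : Prop :=
  ∃ (b : Bool) (u v : Fin w), u ∈ B.V i.castSucc ∧ v ∈ B.V i.castSucc ∧ u ≠ v ∧
    B.trans i b u = B.trans i b v

/-- The number of colliding layers of `B`. -/
noncomputable def collidingCount (B : ROBP w n) : ℕ :=
  Nat.card {i : Fin n // B.Colliding i}

/-- The value of `B` on `x` when all vertices of `V 0` are interpreted as start
vertices: the average of the `±1` outcomes of the corresponding computation paths. -/
noncomputable def avgEval (B : ROBP w n) (x : Fin n → Bool) : ℝ :=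
  (∑ v ∈ B.V 0, (if B.accept (B.runTo x v 0 n) then (-1 : ℝ) else 1)) / ((B.V 0).card : ℝ)

/-- The averaged value of the suffix of `B` starting at layer `t`, whose start-vertex
set is `V t`. -/
noncomputable def suffixEval (B : ROBP w n) (t : Fin (n + 1)) (x : Fin n → Bool) : ℝ :=
  (∑ v ∈ B.V t, (if B.accept (B.runTo x v (t : ℕ) n) then (-1 : ℝ) else 1)) /
    ((B.V t).card : ℝ)

/-- `B` is a `(w, ℓ, m)`-ROBP: it can be written as a concatenation of `m` consecutive
blocks, each block boundary layer having at most `2` vertices and each block having at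
most `ℓ` colliding layers. -/
def IsDecomp (B : ROBP w n) (ℓ m : ℕ) : Prop :=
  ∃ cut : Fin (m + 1) → Fin (n + 1),
    Monotone cut ∧ cut 0 = 0 ∧ cut (Fin.last m) = Fin.last n ∧
    (∀ j, (B.V (cut j)).card ≤ 2) ∧
    (∀ j : Fin m,
      Nat.card {i : Fin n //
        (cut j.castSucc : ℕ) ≤ (i : ℕ) ∧ (i : ℕ) < (cut j.succ : ℕ) ∧ B.Colliding i} ≤ ℓ)

end ROBP

/-- `G` is a pseudorandom generator that `ε`-fools the real-valued function `f`. -/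
def fools {r n : ℕ} (G : (Fin r → Bool) → (Fin n → Bool)) (f : (Fin n → Bool) → ℝ)
    (ε : ℝ) : Prop :=
  |uexp f - uexp (fun s => f (G s))| ≤ ε

/-- Expectation of `f` under the distribution with mass function `μ`. -/
noncomputable def dExp {α : Type*} [Fintype α] (μ f : α → ℝ) : ℝ :=
  ∑ x : α, μ x * f x

/-- Expectation over a `p`-random subset `T ⊆ [n]` (each coordinate kept in `T`
independently with probability `p`). -/
noncomputable def rpExpect (n : ℕ) (p : ℝ) (g : Finset (Fin n) → ℝ) : ℝ :=
  ∑ T : Finset (Fin n), p ^ T.card * (1 - p) ^ (n - T.card) * g T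

section UniformExpectation

variable {α ι : Type*} [Fintype α]

lemma uexp_sum (s : Finset ι) (g : ι → α → ℝ) :
    uexp (fun x => ∑ j ∈ s, g j x) = ∑ j ∈ s, uexp (g j) := by
  simp only [uexp, Finset.sum_comm (s := Finset.univ), Finset.sum_div]

lemma uexp_const_mul (c : ℝ) (g : α → ℝ) : uexp (fun x => c * g x) = c * uexp g := by
  simp only [uexp, ← Finset.mul_sum, mul_div_assoc]

end UniformExpectation

section BooleanCube

variable {n : ℕ}

def boolSign (b : Bool) : ℝ := if b then 1 else -1

def walsh (S : Finset (Fin n)) (x : Fin n → Bool) : ℝ := ∏ i ∈ S, boolSign (x i)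

lemma walsh_eq_prod_univ (S : Finset (Fin n)) (x : Fin n → Bool) :
    walsh S x = ∏ i, if i ∈ S then boolSign (x i) else 1 := by
  rw [Finset.prod_ite_mem, Finset.univ_inter, walsh]

lemma walsh_mul_walsh (S S' : Finset (Fin n)) (x : Fin n → Bool) :
    walsh S x * walsh S' x = walsh (symmDiff S S') x := by
  simp only [walsh_eq_prod_univ, ← Finset.prod_mul_distrib, Finset.mem_symmDiff]
  refine Finset.prod_congr rfl fun i _ => ?_
  by_cases hS : i ∈ S <;> by_cases hS' : i ∈ S' <;> cases x i <;> simp [hS, hS', boolSign]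

lemma sum_walsh (S : Finset (Fin n)) :
    ∑ x, walsh S x = if S = ∅ then 2 ^ n else 0 := by
  have hcoord (i : Fin n) :
      ∑ b, (if i ∈ S then boolSign b else 1) = if i ∈ S then 0 else 2 := by
    split_ifs <;> norm_num [boolSign]
  simp only [walsh_eq_prod_univ]
  rw [← Fintype.prod_sum (fun i b => if i ∈ S then boolSign b else 1)]
  simp only [hcoord]
  split_ifs with hS
  · simp [hS]
  · obtain ⟨i, hi⟩ := Finset.nonempty_iff_ne_empty.2 hS
    exact Finset.prod_eq_zero (Finset.mem_univ i) (if_pos hi)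

lemma uexp_walsh (S : Finset (Fin n)) : uexp (walsh S) = if S = ∅ then 1 else 0 := by
  simp only [uexp, sum_walsh]
  split_ifs <;> simp

lemma uexp_walsh_mul_walsh (S S' : Finset (Fin n)) :
    uexp (fun x => walsh S x * walsh S' x) = if S = S' then 1 else 0 := by
  simp only [walsh_mul_walsh, uexp_walsh, ← Finset.bot_eq_empty, symmDiff_eq_bot]

lemma sum_walsh_mul_walsh_apply (x y : Fin n → Bool) :
    ∑ S, walsh S x * walsh S y = if x = y then 2 ^ n else 0 := by
  have hcoord (i : Fin n) :
      boolSign (x i) * boolSign (y i) + 1 = if x i = y i then 2 else 0 := by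
    cases x i <;> cases y i <;> norm_num [boolSign]
  calc ∑ S, walsh S x * walsh S y
      = ∏ i, (boolSign (x i) * boolSign (y i) + 1) := by
        simp [Fintype.prod_add, walsh, Finset.prod_mul_distrib]
    _ = if x = y then 2 ^ n else 0 := by
        simp only [hcoord]
        split_ifs with hxy
        · simp [hxy]
        · obtain ⟨i, hi⟩ := Function.ne_iff.1 hxy
          exact Finset.prod_eq_zero (Finset.mem_univ i) (if_neg hi)

noncomputable def walshCoeff (f : (Fin n → Bool) → ℝ) (S : Finset (Fin n)) : ℝ :=
  uexp (fun x => f x * walsh S x)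

lemma sum_walshCoeff_mul_walsh (f : (Fin n → Bool) → ℝ) (x : Fin n → Bool) :
    ∑ S, walshCoeff f S * walsh S x = f x := by
  calc ∑ S, walshCoeff f S * walsh S x
      = uexp (fun y => ∑ S, walsh S x * (f y * walsh S y)) := by
        simp only [uexp_sum, uexp_const_mul, walshCoeff, mul_comm]
    _ = uexp (fun y => f y * ∑ S, walsh S y * walsh S x) := by
        congr 1; funext y
        rw [Finset.mul_sum]
        exact Finset.sum_congr rfl fun S _ => by ring
    _ = uexp (fun y => if y = x then 2 ^ n * f x else 0) := by
        congr 1; funext y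
        rw [sum_walsh_mul_walsh_apply]
        split_ifs with h <;> simp [h, mul_comm]
    _ = f x := by
        simp [uexp]

lemma uexp_sq_eq_sum_sq_walshCoeff (f : (Fin n → Bool) → ℝ) :
    uexp (fun x => f x ^ 2) = ∑ S, walshCoeff f S ^ 2 := by
  calc uexp (fun x => f x ^ 2)
      = uexp (fun x => ∑ S, walshCoeff f S * (f x * walsh S x)) := by
        congr 1; funext x
        rw [sq]
        nth_rw 2 [← sum_walshCoeff_mul_walsh f x]
        rw [Finset.mul_sum]
        exact Finset.sum_congr rfl fun S _ => by ring
    _ = ∑ S, walshCoeff f S ^ 2 := by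
        simp only [uexp_sum, uexp_const_mul, walshCoeff, sq]

lemma walshCoeff_empty (f : (Fin n → Bool) → ℝ) : walshCoeff f ∅ = uexp f := by
  simp [walshCoeff, walsh]

lemma uvar_eq_sum_sq_walshCoeff (f : (Fin n → Bool) → ℝ) :
    uvar f = ∑ S ∈ Finset.univ.erase ∅, walshCoeff f S ^ 2 := by
  rw [uvar, uexp_sq_eq_sum_sq_walshCoeff, ← Finset.add_sum_erase _ _ (Finset.mem_univ ∅),
    walshCoeff_empty, add_sub_cancel_left]

lemma walsh_sel (T S : Finset (Fin n)) (x y : Fin n → Bool) :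
    walsh S (sel T x y) = walsh (S ∩ T) x * walsh (S \ T) y := by
  rw [walsh, ← Finset.prod_inter_mul_prod_sdiff S T]
  congr 1 <;> refine Finset.prod_congr rfl fun i hi => ?_
  · simp [sel, (Finset.mem_inter.1 hi).2]
  · simp [sel, (Finset.mem_sdiff.1 hi).2]

lemma biasFn_walsh (T S : Finset (Fin n)) (x : Fin n → Bool) :
    biasFn T (walsh S) x = if S ⊆ T then walsh S x else 0 := by
  simp only [biasFn, walsh_sel, uexp_const_mul, uexp_walsh, Finset.sdiff_eq_empty_iff_subset]
  split_ifs with h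
  · rw [Finset.inter_eq_left.2 h, mul_one]
  · rw [mul_zero]

lemma biasFn_eq_sum_walshCoeff_mul_walsh (T : Finset (Fin n)) (f : (Fin n → Bool) → ℝ)
    (x : Fin n → Bool) :
    biasFn T f x = ∑ S ∈ T.powerset, walshCoeff f S * walsh S x := by
  calc biasFn T f x
      = ∑ S, walshCoeff f S * biasFn T (walsh S) x := by
        simp only [biasFn, ← uexp_const_mul, ← uexp_sum, sum_walshCoeff_mul_walsh]
    _ = ∑ S ∈ T.powerset, walshCoeff f S * walsh S x := by
        simp only [biasFn_walsh, mul_ite, mul_zero, ← Finset.mem_powerset,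
          Finset.sum_ite_mem, Finset.univ_inter]

lemma walshCoeff_biasFn (T : Finset (Fin n)) (f : (Fin n → Bool) → ℝ) (S : Finset (Fin n)) :
    walshCoeff (biasFn T f) S = if S ⊆ T then walshCoeff f S else 0 := by
  simp only [walshCoeff, biasFn_eq_sum_walshCoeff_mul_walsh, Finset.sum_mul, mul_assoc,
    uexp_sum, uexp_const_mul, uexp_walsh_mul_walsh, mul_ite, mul_one, mul_zero,
    Finset.sum_ite_eq', Finset.mem_powerset]

lemma uvar_biasFn (T : Finset (Fin n)) (f : (Fin n → Bool) → ℝ) :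
    uvar (biasFn T f) = ∑ S ∈ Finset.univ.erase ∅, walshCoeff f S ^ 2 * ind (S ⊆ T) := by
  rw [uvar_eq_sum_sq_walshCoeff]
  refine Finset.sum_congr rfl fun S _ => ?_
  by_cases h : S ⊆ T <;> simp [walshCoeff_biasFn, ind, h]

end BooleanCube

section RandomRestriction

variable {n : ℕ}

lemma prod_ind {ι : Type*} (s : Finset ι) (P : ι → Prop) :
    ∏ i ∈ s, ind (P i) = ind (∀ i ∈ s, P i) := by
  simp [ind, Finset.prod_ite_zero]

lemma dExp_sum_mul {α ι : Type*} [Fintype α] (μ : α → ℝ) (J : Finset ι) (w : ι → ℝ)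
    (h : ι → α → ℝ) :
    dExp μ (fun x => ∑ j ∈ J, w j * h j x) = ∑ j ∈ J, w j * dExp μ (h j) := by
  simp only [dExp, Finset.mul_sum]
  rw [Finset.sum_comm]
  exact Finset.sum_congr rfl fun j _ => Finset.sum_congr rfl fun x _ => by ring

lemma rpExpect_eq_dExp (p : ℝ) (g : Finset (Fin n) → ℝ) :
    rpExpect n p g = dExp (fun T => p ^ T.card * (1 - p) ^ (n - T.card)) g :=
  rfl

lemma rpExpect_ind_subset (p : ℝ) (U : Finset (Fin n)) :
    rpExpect n p (fun T => ind (U ⊆ T)) = p ^ U.card := by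
  -- the weight of `T` factors over the coordinates, and `1[U ⊆ T]` is absorbed into the
  -- factors of the coordinates outside `T`
  calc rpExpect n p (fun T => ind (U ⊆ T))
      = ∑ T, (∏ i ∈ T, p) * ∏ i ∈ Tᶜ, (1 - p) * ind (i ∉ U) := by
        refine Finset.sum_congr rfl fun T _ => ?_
        have hsub : (∀ i ∈ Tᶜ, i ∉ U) ↔ U ⊆ T := by
          simp only [Finset.mem_compl]
          exact ⟨fun h i hi => not_not.1 fun hT => h i hT hi, fun h i hT hi => hT (h hi)⟩
        rw [Finset.prod_mul_distrib, prod_ind, Finset.prod_const, Finset.prod_const,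
          Finset.card_compl, Fintype.card_fin, hsub, mul_assoc]
    _ = ∏ i, (p + (1 - p) * ind (i ∉ U)) := (Fintype.prod_add _ _).symm
    _ = ∏ i, if i ∈ U then p else 1 := by
        refine Finset.prod_congr rfl fun i _ => ?_
        by_cases h : i ∈ U <;> simp [ind, h]
    _ = p ^ U.card := by
        rw [Finset.prod_ite_mem, Finset.univ_inter, Finset.prod_const]

lemma abs_dExp_ind_subset_sub_pow_le {μ : Finset (Fin n) → ℝ} {p δ : ℝ}
    (hμ1 : ∑ T, μ T = 1) (hδ : 0 ≤ δ)
    (hbias : ∀ S : Finset (Fin n), S.Nonempty →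
      |dExp μ (fun T => ind (S ⊆ T)) - p ^ S.card| ≤ δ)
    (U : Finset (Fin n)) :
    |dExp μ (fun T => ind (U ⊆ T)) - p ^ U.card| ≤ δ := by
  rcases U.eq_empty_or_nonempty with rfl | hU
  · simpa [dExp, ind, hμ1] using hδ
  · exact hbias U hU

lemma abs_dExp_sub_rpExpect_le {ι : Type*} {μ : Finset (Fin n) → ℝ} {p δ : ℝ}
    (hμ : ∀ U : Finset (Fin n), |dExp μ (fun T => ind (U ⊆ T)) - p ^ U.card| ≤ δ)
    (J : Finset ι) (w : ι → ℝ) (hw : ∀ j ∈ J, 0 ≤ w j) (U : ι → Finset (Fin n)) :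
    |dExp μ (fun T => ∑ j ∈ J, w j * ind (U j ⊆ T)) -
        rpExpect n p (fun T => ∑ j ∈ J, w j * ind (U j ⊆ T))| ≤ δ * ∑ j ∈ J, w j := by
  rw [rpExpect_eq_dExp, dExp_sum_mul, dExp_sum_mul, ← Finset.sum_sub_distrib, Finset.mul_sum]
  refine (Finset.abs_sum_le_sum_abs _ _).trans (Finset.sum_le_sum fun j hj => ?_)
  rw [← mul_sub, abs_mul, abs_of_nonneg (hw j hj), mul_comm δ, ← rpExpect_eq_dExp,
    rpExpect_ind_subset]
  exact mul_le_mul_of_nonneg_left (hμ _) (hw j hj)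

end RandomRestriction

lemma prod_uvar_biasFn {n ℓ : ℕ} (T : Finset (Fin n)) (f : Fin ℓ → (Fin n → Bool) → ℝ) :
    ∏ i, uvar (biasFn T (f i)) =
      ∑ g ∈ Fintype.piFinset (fun _ => Finset.univ.erase ∅),
        (∏ i, walshCoeff (f i) (g i) ^ 2) * ind (Finset.univ.biUnion g ⊆ T) := by
  simp only [uvar_biasFn, Finset.prod_univ_sum, Finset.prod_mul_distrib, prod_ind,
    Finset.biUnion_subset]

theorem vars_prod_general
    (n : ℕ) (p δT : ℝ) (hδ : 0 ≤ δT)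
    (μ : Finset (Fin n) → ℝ)
    (hμ1 : ∑ T : Finset (Fin n), μ T = 1)
    (hbias : ∀ S : Finset (Fin n), S.Nonempty →
      |(∑ T : Finset (Fin n), μ T * ind (S ⊆ T)) - p ^ S.card| ≤ δT)
    (ℓ : ℕ) (f : Fin ℓ → (Fin n → Bool) → ℝ) :
    |(∑ T : Finset (Fin n), μ T * ∏ i, uvar (biasFn T (f i))) -
        rpExpect n p (fun T => ∏ i, uvar (biasFn T (f i)))| ≤
      δT * ∏ i, uvar (f i) := by
  have hvar : ∏ i, uvar (f i) = ∑ g ∈ Fintype.piFinset (fun _ => Finset.univ.erase ∅),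
      ∏ i, walshCoeff (f i) (g i) ^ 2 := by
    simp only [uvar_eq_sum_sq_walshCoeff, Finset.prod_univ_sum]
  simp only [prod_uvar_biasFn]
  rw [hvar]
  exact abs_dExp_sub_rpExpect_le (abs_dExp_ind_subset_sub_pow_le hμ1 hδ hbias) _ _
    (fun g _ => Finset.prod_nonneg fun i _ => sq_nonneg _) _

/-- A `δ_T`-biased distribution with marginals `p` fools products of
variances of bias functions, up to error `δ_T · Π Var[f_i]`. -/
theorem vars_prod
    (n : ℕ) (p δT : ℝ) (hp0 : 0 ≤ p) (hp1 : p ≤ 1) (hδ : 0 ≤ δT)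
    (μ : Finset (Fin n) → ℝ) (hμ0 : ∀ T, 0 ≤ μ T)
    (hμ1 : ∑ T : Finset (Fin n), μ T = 1)
    (hbias : ∀ S : Finset (Fin n), S.Nonempty →
      |(∑ T : Finset (Fin n), μ T * ind (S ⊆ T)) - p ^ S.card| ≤ δT)
    (ℓ : ℕ) (f : Fin ℓ → (Fin n → Bool) → ℝ) :
    |(∑ T : Finset (Fin n), μ T * ∏ i, uvar (biasFn T (f i))) -
        rpExpect n p (fun T => ∏ i, uvar (biasFn T (f i)))| ≤
      δT * ∏ i, uvar (f i) :=
  vars_prod_general n p δT hδ μ hμ1 hbias ℓ f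
end

section
/- In a ROBP of width w with at most ℓ colliding layers, every vertex v with p_v > 0 satisfies p_v ≥ 2^{−(ℓ+1)(w−1)}, where p_v is the probability of reaching v on a uniformly random input. -/
/-!
Let `S_j` be the set of vertices of layer `j` reached with positive probability and `c_j` the
number of colliding layers before `j`. By induction on `j`, every `v ∈ S_j` has
`p_v ≥ 2 ^ (-(|S_j| - 1 + c_j (w - 1)))`. The step uses
`p_u = (Σ_{v →₁ u} p_v + Σ_{v →₋₁ u} p_v) / 2`, obtained by averaging over the bit read at
layer `j`. Crossing a colliding layer may halve the bound, which the extra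
`w - 1 ≥ |S_j| - |S_{j+1}| + 1` in the exponent pays for (unless `|S_{j+1}| = 1` and `p_u = 1`). On a non-colliding layer both edge maps are injective on `S_j`:
either `S` grows, which pays for a halving, or both maps are bijections `S_j → S_{j+1}`, and then
`p_u` is the average of two probabilities that each satisfy the old bound.
-/

open Finset

section UniformExpectation

variable {α β : Type*} [Fintype α]

lemma uexp_nonneg {f : α → ℝ} (hf : ∀ x, 0 ≤ f x) : 0 ≤ uexp f :=
  div_nonneg (sum_nonneg fun x _ => hf x) (Nat.cast_nonneg _)

lemma uexp_one [Nonempty α] : uexp (fun _ : α => (1 : ℝ)) = 1 := by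
  simp [uexp]

lemma uexp_zero : uexp (fun _ : α => (0 : ℝ)) = 0 := by
  simp [uexp]

lemma uexp_add (f g : α → ℝ) : uexp (fun x => f x + g x) = uexp f + uexp g := by
  simp only [uexp, sum_add_distrib, add_div]

lemma uexp_comp_perm (f : α → ℝ) (e : Equiv.Perm α) : uexp (fun x => f (e x)) = uexp f := by
  simp only [uexp, Equiv.sum_comp e f]

lemma exists_eq_of_uexp_ite_pos [DecidableEq β] {R : α → β} {b : β}
    (h : 0 < uexp fun x => if R x = b then (1 : ℝ) else 0) : ∃ x, R x = b := by
  by_contra! hne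
  simp [hne, uexp_zero] at h

lemma uexp_ite_mem [DecidableEq β] (R : α → β) (S : Finset β) :
    (uexp fun x => if R x ∈ S then (1 : ℝ) else 0) =
      ∑ b ∈ S, uexp fun x => if R x = b then (1 : ℝ) else 0 := by
  simp only [uexp, ← sum_div]
  rw [sum_comm]
  simp only [sum_ite_eq]

lemma sum_uexp_ite_eq [Fintype β] [DecidableEq β] (R : α → β) [Nonempty α] :
    ∑ b, (uexp fun x => if R x = b then (1 : ℝ) else 0) = 1 := by
  rw [← uexp_ite_mem]
  simp [uexp_one]

lemma uexp_eq_half_add {ι : Type*} [Fintype ι] [DecidableEq ι] (i : ι)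
    {R : (ι → Bool) → β} (hR : ∀ x b, R (Function.update x i b) = R x) (F : Bool → β → ℝ) :
    (uexp fun x => F (x i) (R x)) =
      ((uexp fun x => F true (R x)) + uexp fun x => F false (R x)) / 2 := by
  set flip : Equiv.Perm (ι → Bool) := Function.Involutive.toPerm
    (fun x => Function.update x i (!x i)) fun x => by ext t; by_cases t = i <;> simp_all
  have hflip : ∀ x, F (flip x i) (R (flip x)) = F (!x i) (R x) := fun x => by
    change F (Function.update x i (!x i) i) (R (Function.update x i (!x i))) = _
    rw [Function.update_self, hR]
  have hpair : ∀ x, F (x i) (R x) + F (!x i) (R x) = F true (R x) + F false (R x) := fun x => by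
    cases x i <;> simp [add_comm]
  rw [← uexp_add, ← funext hpair, uexp_add, ← funext hflip,
    uexp_comp_perm (fun x => F (x i) (R x))]
  ring

end UniformExpectation

lemma half_pow_le_of_half_le {p q : ℝ} {k m : ℕ} (hp : (1 / 2 : ℝ) ^ k ≤ p) (hpq : p / 2 ≤ q)
    (hkm : k < m) : (1 / 2 : ℝ) ^ m ≤ q :=
  calc (1 / 2 : ℝ) ^ m ≤ (1 / 2) ^ (k + 1) :=
        pow_le_pow_of_le_one (by norm_num) (by norm_num) hkm
    _ = (1 / 2) ^ k / 2 := by ring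
    _ ≤ q := by linarith

namespace ROBP

variable {w n : ℕ} (B : ROBP w n)

section Run

variable (x : Fin n → Bool)

lemma runTo_self (v : Fin w) (i : ℕ) : B.runTo x v i i = v := by
  rw [runTo, dif_neg (by omega)]

lemma runTo_of_lt (v : Fin w) {i j : ℕ} (hij : i < j) (hi : i < n) :
    B.runTo x v i j = B.runTo x (B.trans ⟨i, hi⟩ (x ⟨i, hi⟩) v) (i + 1) j := by
  rw [runTo, dif_pos ⟨hij, hi⟩]

lemma runTo_succ_right (v : Fin w) {i j : ℕ} (hij : i ≤ j) (hj : j < n) :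
    B.runTo x v i (j + 1) = B.trans ⟨j, hj⟩ (x ⟨j, hj⟩) (B.runTo x v i j) := by
  induction hk : j - i generalizing i v with
  | zero =>
    obtain rfl : i = j := by omega
    rw [runTo_of_lt _ _ _ (Nat.lt_succ_self i) hj, runTo_self, runTo_self]
  | succ k ih =>
    have hi : i < n := by omega
    rw [runTo_of_lt _ _ _ (by omega : i < j + 1) hi, runTo_of_lt _ _ _ (by omega : i < j) hi]
    exact ih _ (by omega) (by omega)

lemma runTo_start_mem {j : ℕ} (hj : j ≤ n) : B.runTo x B.start 0 j ∈ B.V ⟨j, by omega⟩ := by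
  induction j with
  | zero => simpa [runTo_self] using B.start_mem
  | succ j ih =>
    rw [runTo_succ_right _ _ _ (Nat.zero_le j) (by omega)]
    exact B.trans_mem _ _ _ (ih (by omega))

lemma runTo_update (v : Fin w) (k : Fin n) (b : Bool) {j : ℕ} (hj : j ≤ k) :
    B.runTo (Function.update x k b) v 0 j = B.runTo x v 0 j := by
  induction j with
  | zero => rw [runTo_self, runTo_self]
  | succ j ih =>
    have hjn : j < n := by omega
    rw [runTo_succ_right _ _ _ (Nat.zero_le j) hjn, runTo_succ_right _ _ _ (Nat.zero_le j) hjn,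
      ih (by omega), Function.update_of_ne (by simp [Fin.ext_iff]; omega)]

end Run

section Reach

lemma reachProb_nonneg (j : ℕ) (v : Fin w) : 0 ≤ B.reachProb j v :=
  uexp_nonneg fun _ => by split <;> norm_num

lemma sum_reachProb (j : ℕ) : ∑ v, B.reachProb j v = 1 :=
  sum_uexp_ite_eq _

lemma reachProb_zero_eq_one {v : Fin w} (hv : 0 < B.reachProb 0 v) : B.reachProb 0 v = 1 := by
  obtain ⟨x, rfl⟩ := exists_eq_of_uexp_ite_pos hv
  simp only [reachProb, runTo_self, if_true, uexp_one]

lemma mem_V_of_reachProb_pos {j : ℕ} (hj : j ≤ n) {v : Fin w} (hv : 0 < B.reachProb j v) :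
    v ∈ B.V ⟨j, by omega⟩ := by
  obtain ⟨x, rfl⟩ := exists_eq_of_uexp_ite_pos hv
  exact B.runTo_start_mem x hj

lemma reachProb_succ (i : Fin n) (u : Fin w) :
    B.reachProb (i + 1) u =
      ((∑ v with B.trans i true v = u, B.reachProb i v) +
        ∑ v with B.trans i false v = u, B.reachProb i v) / 2 := by
  have hpre : ∀ b,
      (uexp fun x => if B.trans i b (B.runTo x B.start 0 i) = u then (1 : ℝ) else 0) =
        ∑ v with B.trans i b v = u, B.reachProb i v := fun b => by
    simp only [reachProb, ← uexp_ite_mem, mem_filter, mem_univ, true_and]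
  rw [← hpre, ← hpre, ← uexp_eq_half_add i (fun x b => B.runTo_update x B.start i b le_rfl)
    (fun b v => if B.trans i b v = u then (1 : ℝ) else 0)]
  simp only [reachProb, B.runTo_succ_right _ _ (Nat.zero_le i) i.isLt]

lemma reachProb_le_sum_trans_eq {i : Fin n} {b : Bool} {v u : Fin w} (h : B.trans i b v = u) :
    B.reachProb i v ≤ ∑ v' with B.trans i b v' = u, B.reachProb i v' :=
  single_le_sum (f := B.reachProb i) (fun _ _ => B.reachProb_nonneg _ _)
    (mem_filter.mpr ⟨mem_univ _, h⟩)

lemma half_reachProb_le_succ {i : Fin n} {b : Bool} {v u : Fin w} (h : B.trans i b v = u) :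
    B.reachProb i v / 2 ≤ B.reachProb (i + 1) u := by
  have hnn : ∀ b', 0 ≤ ∑ v' with B.trans i b' v' = u, B.reachProb i v' := fun _ =>
    sum_nonneg fun _ _ => B.reachProb_nonneg _ _
  rw [reachProb_succ]
  cases b
  · linarith [B.reachProb_le_sum_trans_eq h, hnn true]
  · linarith [B.reachProb_le_sum_trans_eq h, hnn false]

lemma reachProb_add_reachProb_div_two_le_succ {i : Fin n} {vt vf u : Fin w}
    (ht : B.trans i true vt = u) (hf : B.trans i false vf = u) :
    (B.reachProb i vt + B.reachProb i vf) / 2 ≤ B.reachProb (i + 1) u := by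
  rw [reachProb_succ]
  gcongr
  · exact B.reachProb_le_sum_trans_eq ht
  · exact B.reachProb_le_sum_trans_eq hf

lemma exists_reachProb_pos_trans_eq {i : Fin n} {u : Fin w} (hu : 0 < B.reachProb (i + 1) u) :
    ∃ v, 0 < B.reachProb i v ∧ ∃ b, B.trans i b v = u := by
  by_contra! h
  have hzero : ∀ b, ∑ v with B.trans i b v = u, B.reachProb i v = 0 := fun b =>
    sum_eq_zero fun v hv =>
      le_antisymm (not_lt.mp fun hp => h v hp b (by simpa using hv)) (B.reachProb_nonneg _ _)
  rw [reachProb_succ, hzero, hzero] at hu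
  norm_num at hu

end Reach

section Support

noncomputable def support (j : ℕ) : Finset (Fin w) := {v | 0 < B.reachProb j v}

variable {B}

@[simp]
lemma mem_support {j : ℕ} {v : Fin w} : v ∈ B.support j ↔ 0 < B.reachProb j v := by
  simp [support]

variable (B)

lemma card_support_le (j : ℕ) : #(B.support j) ≤ w :=
  (card_le_univ _).trans_eq (Fintype.card_fin w)

lemma card_support_pos (j : ℕ) : 0 < #(B.support j) := by
  refine card_pos.mpr ?_
  by_contra! h
  have := B.sum_reachProb j
  rw [sum_eq_zero fun v _ => le_antisymm (not_lt.mp fun hv =>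
    (eq_empty_iff_forall_notMem.mp h v (mem_support.mpr hv))) (B.reachProb_nonneg j v)] at this
  norm_num at this

lemma reachProb_eq_one_of_card_support_eq_one {j : ℕ} (h : #(B.support j) = 1) {u : Fin w}
    (hu : 0 < B.reachProb j u) : B.reachProb j u = 1 := by
  obtain ⟨a, ha⟩ := card_eq_one.mp h
  have hsupp : B.support j = {u} := by
    rwa [mem_singleton.mp (ha ▸ mem_support.mpr hu : u ∈ ({a} : Finset (Fin w)))]
  have hsum : ∑ v ∈ B.support j, B.reachProb j v = 1 := by
    rw [support, sum_filter_of_ne fun v _ hv => lt_of_le_of_ne (B.reachProb_nonneg j v) hv.symm,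
      sum_reachProb]
  rwa [hsupp, sum_singleton] at hsum

lemma mapsTo_support (i : Fin n) (b : Bool) :
    Set.MapsTo (B.trans i b) (B.support i) (B.support (i + 1)) := fun v hv => by
  simp only [mem_coe, mem_support] at hv ⊢
  exact (div_pos hv two_pos).trans_le (B.half_reachProb_le_succ rfl)

variable {B}

lemma injOn_support {i : Fin n} (hi : ¬B.Colliding i) (b : Bool) :
    Set.InjOn (B.trans i b) (B.support i) := fun u hu v hv huv => by
  by_contra hne
  have hV : ∀ z ∈ (B.support i : Set (Fin w)), z ∈ B.V i.castSucc := fun z hz =>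
    B.mem_V_of_reachProb_pos i.isLt.le (mem_support.mp hz)
  exact hi ⟨b, u, v, hV u hu, hV v hv, hne, huv⟩

lemma card_support_le_succ {i : Fin n} (hi : ¬B.Colliding i) :
    #(B.support i) ≤ #(B.support (i + 1)) :=
  card_le_card_of_injOn _ (B.mapsTo_support i true) (injOn_support hi true)

lemma image_support_eq {i : Fin n} (hi : ¬B.Colliding i)
    (hcard : #(B.support (i + 1)) ≤ #(B.support i)) (b : Bool) :
    (B.support i).image (B.trans i b) = B.support (i + 1) := by
  refine eq_of_subset_of_card_le ?_ ?_
  · simpa only [← coe_subset, coe_image] using (B.mapsTo_support i b).image_subset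
  · rwa [card_image_of_injOn (injOn_support hi b)]

end Support

section Exponent

open Classical in
noncomputable def numCollidingBefore (j : ℕ) : ℕ := #{i : Fin n | (i : ℕ) < j ∧ B.Colliding i}

lemma numCollidingBefore_mono : Monotone B.numCollidingBefore := fun j k hjk => by
  classical
  exact card_le_card (monotone_filter_right _ fun _ _ => And.imp_left (·.trans_le hjk))

lemma numCollidingBefore_lt_succ {i : Fin n} (hi : B.Colliding i) :
    B.numCollidingBefore i < B.numCollidingBefore (i + 1) := by
  classical
  refine card_lt_card
    ⟨monotone_filter_right _ fun _ _ => And.imp_left fun _ => by omega, fun hsub => ?_⟩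
  simpa using hsub (mem_filter.mpr ⟨mem_univ i, Nat.lt_succ_self i, hi⟩)

lemma numCollidingBefore_le_collidingCount (j : ℕ) :
    B.numCollidingBefore j ≤ B.collidingCount := by
  classical
  rw [collidingCount, Nat.card_eq_fintype_card, Fintype.card_subtype]
  exact card_le_card (monotone_filter_right _ fun _ _ => And.right)

noncomputable def reachExponent (j : ℕ) : ℕ :=
  #(B.support j) - 1 + B.numCollidingBefore j * (w - 1)

lemma reachExponent_le (j : ℕ) : B.reachExponent j ≤ (B.collidingCount + 1) * (w - 1) := by
  have := Nat.mul_le_mul_right (w - 1) (B.numCollidingBefore_le_collidingCount j)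
  have := B.card_support_le j
  rw [reachExponent, add_one_mul]
  omega

variable {B}

lemma reachExponent_succ_le {i : Fin n} (hcard : #(B.support i) ≤ #(B.support (i + 1))) :
    B.reachExponent i ≤ B.reachExponent (i + 1) := by
  have := Nat.mul_le_mul_right (w - 1) (B.numCollidingBefore_mono (Nat.le_add_right (i : ℕ) 1))
  rw [reachExponent, reachExponent]
  omega

lemma reachExponent_lt_succ_of_card_lt {i : Fin n}
    (hcard : #(B.support i) < #(B.support (i + 1))) :
    B.reachExponent i < B.reachExponent (i + 1) := by
  have := Nat.mul_le_mul_right (w - 1) (B.numCollidingBefore_mono (Nat.le_add_right (i : ℕ) 1))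
  have := B.card_support_pos i
  rw [reachExponent, reachExponent]
  omega

lemma reachExponent_lt_succ_of_colliding {i : Fin n} (hi : B.Colliding i)
    (hcard : 2 ≤ #(B.support (i + 1))) :
    B.reachExponent i < B.reachExponent (i + 1) := by
  have := B.card_support_le i
  have := Nat.mul_le_mul_right (w - 1) (B.numCollidingBefore_lt_succ hi)
  rw [Nat.succ_mul] at this
  rw [reachExponent, reachExponent]
  omega

end Exponent

section Induction

variable {B}

lemma half_pow_reachExponent_le_succ {i : Fin n}
    (ih : ∀ v, 0 < B.reachProb i v → (1 / 2 : ℝ) ^ B.reachExponent i ≤ B.reachProb i v)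
    {u : Fin w} (hu : 0 < B.reachProb (i + 1) u) :
    (1 / 2 : ℝ) ^ B.reachExponent (i + 1) ≤ B.reachProb (i + 1) u := by
  obtain ⟨v, hv, b, rfl⟩ := B.exists_reachProb_pos_trans_eq hu
  have halve : ∀ {m}, B.reachExponent i < m →
      (1 / 2 : ℝ) ^ m ≤ B.reachProb (i + 1) (B.trans i b v) :=
    half_pow_le_of_half_le (ih v hv) (B.half_reachProb_le_succ rfl)
  by_cases hi : B.Colliding i
  · rcases (Nat.succ_le_of_lt (B.card_support_pos (i + 1))).eq_or_lt with h | h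
    · rw [B.reachProb_eq_one_of_card_support_eq_one h.symm hu]
      exact pow_le_one₀ (by norm_num) (by norm_num)
    · exact halve (reachExponent_lt_succ_of_colliding hi h)
  rcases (card_support_le_succ hi).lt_or_eq with h | h
  · exact halve (reachExponent_lt_succ_of_card_lt h)
  have hu' := mem_support.mpr hu
  obtain ⟨vt, hvt, ht⟩ := mem_image.mp ((image_support_eq hi h.ge true).symm ▸ hu')
  obtain ⟨vf, hvf, hf⟩ := mem_image.mp ((image_support_eq hi h.ge false).symm ▸ hu')
  calc (1 / 2 : ℝ) ^ B.reachExponent (i + 1) ≤ (1 / 2) ^ B.reachExponent i :=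
        pow_le_pow_of_le_one (by norm_num) (by norm_num) (reachExponent_succ_le h.le)
    _ ≤ (B.reachProb i vt + B.reachProb i vf) / 2 := by
        linarith [ih vt (mem_support.mp hvt), ih vf (mem_support.mp hvf)]
    _ ≤ B.reachProb (i + 1) (B.trans i b v) := B.reachProb_add_reachProb_div_two_le_succ ht hf

end Induction

lemma half_pow_reachExponent_le {j : ℕ} (hj : j ≤ n) {v : Fin w}
    (hv : 0 < B.reachProb j v) : (1 / 2 : ℝ) ^ B.reachExponent j ≤ B.reachProb j v := by
  induction j generalizing v with
  | zero =>
    rw [B.reachProb_zero_eq_one hv]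
    exact pow_le_one₀ (by norm_num) (by norm_num)
  | succ j ih =>
    exact half_pow_reachExponent_le_succ (i := ⟨j, by omega⟩) (fun v hv => ih (by omega) hv) hv

end ROBP

/-- In a width-`w` ROBP with at most `ℓ` colliding layers, every
vertex reached with positive probability is reached with probability at least
`2^(-(ℓ+1)(w-1))`. -/
theorem reach_prob_lower_bound
    (w n ℓ : ℕ) (B : ROBP w n) (hcol : B.collidingCount ≤ ℓ)
    (j : ℕ) (hj : j ≤ n) (v : Fin w) (hv : 0 < B.reachProb j v) :
    (1 : ℝ) / 2 ^ ((ℓ + 1) * (w - 1)) ≤ B.reachProb j v := by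
  have hexp : B.reachExponent j ≤ (ℓ + 1) * (w - 1) :=
    (B.reachExponent_le j).trans (Nat.mul_le_mul_right _ (Nat.succ_le_succ hcol))
  rw [← one_div_pow]
  exact (pow_le_pow_of_le_one (by norm_num) (by norm_num) hexp).trans
    (B.half_pow_reachExponent_le hj hv)
end

section
/- Let B be a width-3 ROBP with two vertices v_{1,1}, v_{1,2} in its first layer, at most ℓ colliding layers, and suppose there exists an input string on which the two computation paths starting from v_{1,1} and v_{1,2} collide. Let u be the first vertex at which a collision can occur, and let E be the event that a collision happens at u. Then the indicator of E can be computed by a width-3 ROBP with at most ℓ colliding layers. -/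
open Finset

/-
Before the first layer `t` at which the two paths can meet, they always occupy two distinct
vertices of a width-3 layer, and such a pair is determined by the third, unoccupied vertex.
Tracking that vertex gives a width-3 program; at layer `t` it records whether both paths
entered `u`, and afterwards it idles. An edge layer of this program before `t` can only be
colliding if two distinct pairs are mapped to the same pair, which forces two vertices of `B`
to collide on that layer; layer `t - 1` of `B` is colliding anyway, and later layers are
injective. Restricting every layer to its reachable vertices keeps unreachable pairs from
creating spurious collisions.
-/

namespace ROBP

variable {w n : ℕ}

theorem runTo_of_le (B : ROBP w n) (x : Fin n → Bool) (v : Fin w) {i j : ℕ} (h : j ≤ i) :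
    B.runTo x v i j = v := by
  rw [runTo, dif_neg (by omega)]

theorem runTo_congr {B B' : ROBP w n} (htrans : B.trans = B'.trans) {x y : Fin n → Bool}
    (v : Fin w) (i j : ℕ) (hxy : ∀ m : Fin n, (m : ℕ) < j → x m = y m) :
    B.runTo x v i j = B'.runTo y v i j := by
  induction hk : j - i generalizing i v with
  | zero => rw [runTo_of_le _ _ _ (by omega), runTo_of_le _ _ _ (by omega)]
  | succ k ih =>
    rw [runTo, runTo]
    split_ifs with h
    · rw [htrans, hxy ⟨i, h.2⟩ h.1]
      exact ih _ _ (by omega)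
    · rfl

theorem runTo_succ (B : ROBP w n) (x : Fin n → Bool) (v : Fin w) {i : ℕ} (j : Fin n)
    (h : i ≤ j) : B.runTo x v i (j + 1) = B.trans j (x j) (B.runTo x v i j) := by
  induction hk : (j : ℕ) - i generalizing i v with
  | zero =>
    obtain rfl : i = j := by omega
    rw [runTo, dif_pos ⟨by omega, j.isLt⟩, runTo_of_le _ _ _ le_rfl, runTo_of_le _ _ _ le_rfl]
  | succ k ih =>
    rw [runTo, dif_pos ⟨by omega, by omega⟩, ih _ (by omega) (by omega)]
    conv_rhs => rw [runTo, dif_pos ⟨by omega, by omega⟩]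

theorem runTo_update_succ (B : ROBP w n) (x : Fin n → Bool) (v : Fin w) {i : ℕ} (j : Fin n)
    (h : i ≤ j) (b : Bool) :
    B.runTo (Function.update x j b) v i (j + 1) = B.trans j b (B.runTo x v i j) := by
  rw [runTo_succ _ _ _ j h, Function.update_self,
    runTo_congr rfl v i j fun m hm => Function.update_of_ne (Fin.ne_of_lt hm) _ _]

theorem runTo_mem (B : ROBP w n) (x : Fin n → Bool) {v : Fin w} (hv : v ∈ B.V 0)
    (j : Fin (n + 1)) : B.runTo x v 0 j ∈ B.V j := by
  induction j using Fin.induction with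
  | zero => rwa [Fin.val_zero, runTo_of_le _ _ _ le_rfl]
  | succ i ih =>
    rw [Fin.val_succ, runTo_succ _ _ _ i (Nat.zero_le _)]
    exact B.trans_mem i _ _ ih

theorem colliding_of_runTo_eq (B : ROBP w n) {v1 v2 : Fin w} (hv1 : v1 ∈ B.V 0)
    (hv2 : v2 ∈ B.V 0) (x : Fin n → Bool) (i : Fin n)
    (hne : B.runTo x v1 0 i ≠ B.runTo x v2 0 i)
    (heq : B.runTo x v1 0 (i + 1) = B.runTo x v2 0 (i + 1)) : B.Colliding i := by
  rw [runTo_succ _ _ _ i (Nat.zero_le _), runTo_succ _ _ _ i (Nat.zero_le _)] at heq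
  exact ⟨x i, _, _, B.runTo_mem x hv1 i.castSucc, B.runTo_mem x hv2 i.castSucc, hne, heq⟩

theorem collidingCount_le_of_colliding_imp {w' : ℕ} {B : ROBP w n} {B' : ROBP w' n}
    (h : ∀ i, B'.Colliding i → B.Colliding i) : B'.collidingCount ≤ B.collidingCount :=
  Nat.card_le_card_of_injective (fun i => ⟨i.1, h i.1 i.2⟩) fun _ _ hij =>
    Subtype.ext (congrArg (fun j : {j // B.Colliding j} => j.1) hij)

def complete [NeZero w] (trans : Fin n → Bool → Fin w → Fin w) (start : Fin w)
    (accept : Fin w → Bool) : ROBP w n where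
  V _ := univ
  V_nonempty _ := univ_nonempty
  start := start
  start_mem := mem_univ _
  trans := trans
  trans_mem _ _ _ _ := mem_univ _
  accept := accept

def trim (B : ROBP w n) : ROBP w n where
  V j := univ.image fun x => B.runTo x B.start 0 j
  V_nonempty _ := univ_nonempty.image _
  start := B.start
  start_mem := mem_image.2 ⟨fun _ => true, mem_univ _, B.runTo_of_le _ _ le_rfl⟩
  trans := B.trans
  trans_mem i b v hv := by
    obtain ⟨x, -, rfl⟩ := mem_image.1 hv
    exact mem_image.2 ⟨Function.update x i b, mem_univ _,
      by rw [Fin.val_succ, runTo_update_succ _ _ _ i (Nat.zero_le _)]; rfl⟩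
  accept := B.accept

theorem run_trim (B : ROBP w n) (x : Fin n → Bool) : B.trim.run x = B.run x :=
  runTo_congr (B := B.trim) (B' := B) rfl _ _ _ fun _ _ => rfl

theorem colliding_trim_iff (B : ROBP w n) (i : Fin n) :
    B.trim.Colliding i ↔ ∃ (b : Bool) (x y : Fin n → Bool),
      B.runTo x B.start 0 i ≠ B.runTo y B.start 0 i ∧
      B.trans i b (B.runTo x B.start 0 i) = B.trans i b (B.runTo y B.start 0 i) := by
  simp only [Colliding, trim, mem_image, mem_univ, true_and, Fin.val_castSucc]
  constructor
  · rintro ⟨b, _, _, ⟨x, rfl⟩, ⟨y, rfl⟩, hne, heq⟩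
    exact ⟨b, x, y, hne, heq⟩
  · rintro ⟨b, x, y, hne, heq⟩
    exact ⟨b, _, _, ⟨x, rfl⟩, ⟨y, rfl⟩, hne, heq⟩

def ApartBefore (B : ROBP w n) (v1 v2 : Fin w) (t : ℕ) : Prop :=
  ∀ (x : Fin n → Bool) (j : ℕ), j < t → B.runTo x v1 0 j ≠ B.runTo x v2 0 j

theorem ApartBefore.trans_ne {B : ROBP w n} {v1 v2 : Fin w} {t : ℕ}
    (h : B.ApartBefore v1 v2 t) (x : Fin n → Bool) (i : Fin n) (hi : (i : ℕ) + 1 < t)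
    (b : Bool) : B.trans i b (B.runTo x v1 0 i) ≠ B.trans i b (B.runTo x v2 0 i) := by
  rw [← runTo_update_succ _ _ _ i (Nat.zero_le _), ← runTo_update_succ _ _ _ i (Nat.zero_le _)]
  exact h _ _ hi

end ROBP

/-- Since `0 + 1 + 2 = 0` in `Fin 3`, this is the element other than `a` and `b` when `a ≠ b`;
conversely, `c` is the code of the pair `{c + 1, c + 2}`. -/
def third (a b : Fin 3) : Fin 3 := -(a + b)

theorem third_comm (a b : Fin 3) : third a b = third b a := by
  rw [third, third, add_comm]

theorem third_add_one_add_two {a b : Fin 3} :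
    a ≠ b → (third a b + 1 = a ∧ third a b + 2 = b) ∨ (third a b + 1 = b ∧ third a b + 2 = a) := by
  revert a b
  decide

theorem third_map_third (f : Fin 3 → Fin 3) {a b : Fin 3} (h : a ≠ b) :
    third (f (third a b + 1)) (f (third a b + 2)) = third (f a) (f b) := by
  rcases third_add_one_add_two h with ⟨h1, h2⟩ | ⟨h1, h2⟩ <;> rw [h1, h2]
  exact third_comm _ _

theorem map_third_eq_and_iff (f : Fin 3 → Fin 3) {a b : Fin 3} (h : a ≠ b) (u : Fin 3) :
    f (third a b + 1) = u ∧ f (third a b + 2) = u ↔ f a = u ∧ f b = u := by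
  rcases third_add_one_add_two h with ⟨h1, h2⟩ | ⟨h1, h2⟩ <;> rw [h1, h2]
  exact and_comm

theorem exists_ne_map_eq_of_third_eq (f : Fin 3 → Fin 3) {a b a' b' : Fin 3}
    (hf : f a ≠ f b) (hf' : f a' ≠ f b') (hne : third a b ≠ third a' b')
    (heq : third (f a) (f b) = third (f a') (f b')) :
    ∃ p q : Fin 3, (p = a ∨ p = b) ∧ (q = a' ∨ q = b') ∧ p ≠ q ∧ f p = f q := by
  revert f a b a' b'
  decide

namespace ROBP

variable {n : ℕ}

/-- Before layer `t` the state `c` stands for the pair `{c + 1, c + 2}` of vertices occupied by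
the two paths of `B`; across layer `t - 1` it becomes `0` if both paths enter `u` and `1`
otherwise, and then it is kept. -/
def collisionTrans (B : ROBP 3 n) (t : ℕ) (u : Fin 3) (i : Fin n) (b : Bool) (c : Fin 3) :
    Fin 3 :=
  if (i : ℕ) + 1 < t then third (B.trans i b (c + 1)) (B.trans i b (c + 2))
  else if (i : ℕ) + 1 = t then
    if B.trans i b (c + 1) = u ∧ B.trans i b (c + 2) = u then 0 else 1
  else c

def collisionProgram (B : ROBP 3 n) (v1 v2 : Fin 3) (t : ℕ) (u : Fin 3) : ROBP 3 n :=
  complete (collisionTrans B t u) (third v1 v2) (· == 0)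

section

variable {B : ROBP 3 n} {v1 v2 : Fin 3} {t : ℕ} (u : Fin 3)

theorem collisionProgram_start : (collisionProgram B v1 v2 t u).start = third v1 v2 := rfl

theorem collisionProgram_trans :
    (collisionProgram B v1 v2 t u).trans = collisionTrans B t u := rfl

theorem runTo_collisionProgram_of_lt (h : B.ApartBefore v1 v2 t) (x : Fin n → Bool)
    (j : Fin (n + 1)) (hj : (j : ℕ) < t) :
    (collisionProgram B v1 v2 t u).runTo x (third v1 v2) 0 j =
      third (B.runTo x v1 0 j) (B.runTo x v2 0 j) := by
  induction j using Fin.induction with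
  | zero => simp only [Fin.val_zero, runTo_of_le _ _ _ le_rfl]
  | succ i ih =>
    rw [Fin.val_castSucc] at ih
    rw [Fin.val_succ] at hj ⊢
    rw [runTo_succ _ _ _ i (Nat.zero_le _), runTo_succ _ _ _ i (Nat.zero_le _),
      runTo_succ _ _ _ i (Nat.zero_le _), ih (by omega),
      collisionProgram_trans, collisionTrans, if_pos hj]
    exact third_map_third _ (h x i (by omega))

theorem runTo_collisionProgram_of_le (h : B.ApartBefore v1 v2 t) (x : Fin n → Bool)
    (j : Fin (n + 1)) (hj : t ≤ j) (ht : 0 < t) :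
    (collisionProgram B v1 v2 t u).runTo x (third v1 v2) 0 j =
      if B.runTo x v1 0 t = u ∧ B.runTo x v2 0 t = u then 0 else 1 := by
  induction j using Fin.induction with
  | zero => simp only [Fin.val_zero] at hj; omega
  | succ i ih =>
    rw [Fin.val_castSucc] at ih
    rw [Fin.val_succ] at hj ⊢
    rw [runTo_succ _ _ _ i (Nat.zero_le _), collisionProgram_trans, collisionTrans,
      if_neg (by omega)]
    rcases hj.eq_or_lt with rfl | hlt
    · have hi := runTo_collisionProgram_of_lt u h x i.castSucc (by simp)
      rw [Fin.val_castSucc] at hi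
      rw [if_pos rfl, hi, runTo_succ _ _ _ i (Nat.zero_le _), runTo_succ _ _ _ i (Nat.zero_le _)]
      exact if_congr (map_third_eq_and_iff _ (h x i (by omega)) u) rfl rfl
    · rw [if_neg (by omega), ih (by omega)]

theorem colliding_of_colliding_trim_collisionProgram (hv1 : v1 ∈ B.V 0) (hv2 : v2 ∈ B.V 0)
    (h : B.ApartBefore v1 v2 t) (hlast : ∀ i : Fin n, (i : ℕ) + 1 = t → B.Colliding i)
    (i : Fin n) (hi : (collisionProgram B v1 v2 t u).trim.Colliding i) : B.Colliding i := by
  obtain ⟨b, x, y, hne, heq⟩ := (colliding_trim_iff _ i).1 hi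
  rw [collisionProgram_start] at hne heq
  rw [collisionProgram_trans] at heq
  rcases lt_trichotomy ((i : ℕ) + 1) t with hlt | hteq | hgt
  · have hx := runTo_collisionProgram_of_lt u h x i.castSucc (by simp; omega)
    have hy := runTo_collisionProgram_of_lt u h y i.castSucc (by simp; omega)
    rw [Fin.val_castSucc] at hx hy
    rw [hx, hy] at hne heq
    rw [collisionTrans, collisionTrans, if_pos hlt, if_pos hlt,
      third_map_third _ (h x i (by omega)), third_map_third _ (h y i (by omega))] at heq
    obtain ⟨p, q, hp, hq, hpq, hfpq⟩ :=
      exists_ne_map_eq_of_third_eq _ (h.trans_ne x i hlt b) (h.trans_ne y i hlt b) hne heq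
    refine ⟨b, p, q, ?_, ?_, hpq, hfpq⟩
    · rcases hp with rfl | rfl
      exacts [B.runTo_mem x hv1 i.castSucc, B.runTo_mem x hv2 i.castSucc]
    · rcases hq with rfl | rfl
      exacts [B.runTo_mem y hv1 i.castSucc, B.runTo_mem y hv2 i.castSucc]
  · exact hlast i hteq
  · simp only [collisionTrans, if_neg (show ¬(i : ℕ) + 1 < t by omega),
      if_neg (show (i : ℕ) + 1 ≠ t by omega)] at heq
    exact absurd heq hne

end

end ROBP

theorem first_collision_detectable_general
    (n ℓ : ℕ) (B : ROBP 3 n) (v1 v2 : Fin 3) (hne : v1 ≠ v2)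
    (hV0 : B.V 0 = {v1, v2})
    (hcol : B.collidingCount ≤ ℓ)
    (t : ℕ) (u : Fin 3)
    (hfirst : 0 < t ∧ t ≤ n ∧
      (∃ x : Fin n → Bool, B.runTo x v1 0 t = u ∧ B.runTo x v2 0 t = u) ∧
      ∀ (t' : ℕ) (v' : Fin 3), 0 < t' → t' < t →
        ¬ ∃ x : Fin n → Bool, B.runTo x v1 0 t' = v' ∧ B.runTo x v2 0 t' = v') :
    ∃ B' : ROBP 3 n, B'.collidingCount ≤ ℓ ∧
      ∀ x, (B'.accept (B'.run x) = true ↔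
        (B.runTo x v1 0 t = u ∧ B.runTo x v2 0 t = u)) := by
  obtain ⟨ht0, htn, ⟨x0, hx01, hx02⟩, hmin⟩ := hfirst
  have hv1 : v1 ∈ B.V 0 := by simp [hV0]
  have hv2 : v2 ∈ B.V 0 := by simp [hV0]
  have hapart : B.ApartBefore v1 v2 t := by
    intro x j hj hmeet
    rcases Nat.eq_zero_or_pos j with rfl | hj0
    · rw [B.runTo_of_le x v1 le_rfl, B.runTo_of_le x v2 le_rfl] at hmeet
      exact hne hmeet
    · exact hmin j _ hj0 hj ⟨x, rfl, hmeet.symm⟩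
  have hlast : ∀ i : Fin n, (i : ℕ) + 1 = t → B.Colliding i := fun i hi =>
    B.colliding_of_runTo_eq hv1 hv2 x0 i (hapart x0 i (by omega)) (by rw [hi, hx01, hx02])
  refine ⟨(B.collisionProgram v1 v2 t u).trim, ?_, fun x => ?_⟩
  · exact (ROBP.collidingCount_le_of_colliding_imp
      (ROBP.colliding_of_colliding_trim_collisionProgram u hv1 hv2 hapart hlast)).trans hcol
  · have hend := ROBP.runTo_collisionProgram_of_le u hapart x (Fin.last n) htn ht0
    rw [Fin.val_last] at hend
    rw [ROBP.run_trim, ROBP.run, ROBP.collisionProgram_start, hend]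
    split_ifs with hmeet <;> simp [ROBP.trim, ROBP.collisionProgram, ROBP.complete, hmeet]

/-- If `B` is a width-3 ROBP with two start vertices, at most `ℓ`
colliding layers, and an input on which the two computation paths collide, then the
event "the two paths collide at `u`", where `u` (at layer `t`) is the first vertex at
which a collision can occur, is computable by a width-3 ROBP with at most `ℓ`
colliding layers. -/
theorem first_collision_detectable
    (n ℓ : ℕ) (B : ROBP 3 n) (v1 v2 : Fin 3) (hne : v1 ≠ v2)
    (hV0 : B.V 0 = {v1, v2})
    (hcol : B.collidingCount ≤ ℓ)
    (hex : ∃ (x : Fin n → Bool) (t : ℕ), 0 < t ∧ t ≤ n ∧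
      B.runTo x v1 0 t = B.runTo x v2 0 t)
    (t : ℕ) (u : Fin 3)
    (hfirst : 0 < t ∧ t ≤ n ∧
      (∃ x : Fin n → Bool, B.runTo x v1 0 t = u ∧ B.runTo x v2 0 t = u) ∧
      ∀ (t' : ℕ) (v' : Fin 3), 0 < t' → t' < t →
        ¬ ∃ x : Fin n → Bool, B.runTo x v1 0 t' = v' ∧ B.runTo x v2 0 t' = v') :
    ∃ B' : ROBP 3 n, B'.collidingCount ≤ ℓ ∧
      ∀ x, (B'.accept (B'.run x) = true ↔
        (B.runTo x v1 0 t = u ∧ B.runTo x v2 0 t = u)) :=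
  first_collision_detectable_general n ℓ B v1 v2 hne hV0 hcol t u hfirst
end
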